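/- (Gentle Operator Lemma) Let ρ be a density matrix and Λ an operator with 0 ≤ Λ ≤ I such that Tr[Λρ] ≥ 1 − ε for some ε > 0. Then ‖ρ − √Λ ρ √Λ‖₁ ≤ 2√ε. -/

import Mathlib

open Matrix BigOperators ComplexOrder

/-- The positive square root of a positive semidefinite matrix (Mathlib's former
`Matrix.PosSemidef.sqrt`, removed since; reinstated with its old definition). -/
noncomputable def Matrix.PosSemidef.sqrt {n 𝕜 : Type*} [Fintype n] [RCLike 𝕜] [DecidableEq n]
    {A : Matrix n n 𝕜} (hA : A.PosSemidef) : Matrix n n 𝕜 :=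
  hA.1.eigenvectorUnitary.1 * diagonal ((↑) ∘ (√·) ∘ hA.1.eigenvalues) *
  (star hA.1.eigenvectorUnitary : Matrix n n 𝕜)

noncomputable def traceNorm {n : Type*} [Fintype n] [DecidableEq n] (A : Matrix n n ℂ) : ℝ :=
  ((Matrix.posSemidef_conjTranspose_mul_self A).sqrt.trace).re

/-!
Write `S = √Λ`. Since `0 ≤ Λ ≤ 1` we have `Λ ≤ S`, hence `(1 - S)² = 1 - 2S + Λ ≤ 1 - Λ`.
Split `ρ - SρS = (1 - S)ρ + Sρ(1 - S)` and test it against the self-adjoint involution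
`K = sign(ρ - SρS)`, which computes the trace norm. Each of the two terms is an inner product
for the semi-inner product `⟪X, Y⟫ = tr (Y ρ Xᴴ)`, so Cauchy–Schwarz bounds it by
`‖1 - S‖ ≤ √(tr (1 - Λ)ρ) ≤ √ε` times `‖K‖ = 1` or `‖KS‖ ≤ 1`.
-/

open scoped MatrixOrder

namespace CFC

variable {A : Type*} [PartialOrder A] [Ring A] [StarRing A] [TopologicalSpace A]
  [StarOrderedRing A] [Algebra ℝ A] [ContinuousFunctionalCalculus ℝ A IsSelfAdjoint]
  [NonnegSpectrumClass ℝ A] [IsSemitopologicalRing A] [T2Space A]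

lemma le_sqrt_of_le_one {a : A} (ha₀ : 0 ≤ a) (ha₁ : a ≤ 1) : a ≤ sqrt a := by
  rw [sqrt_eq_real_sqrt a, cfcₙ_eq_cfc]
  conv_lhs => rw [← cfc_id' ℝ a]
  refine cfc_mono fun x hx => ?_
  have hx₀ : 0 ≤ x := spectrum_nonneg_of_nonneg ha₀ hx
  have hx₁ : x ≤ 1 := (le_one_iff a).mp ha₁ x hx
  exact Real.le_sqrt_of_sq_le (by nlinarith)

lemma one_sub_sqrt_mul_self_le {a : A} (ha₀ : 0 ≤ a) (ha₁ : a ≤ 1) :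
    (1 - sqrt a) * (1 - sqrt a) ≤ 1 - a := by
  have hsq : (1 - a) - (1 - sqrt a) * (1 - sqrt a) = (sqrt a - a) + (sqrt a - a) := by
    rw [show (1 - sqrt a) * (1 - sqrt a) = 1 - sqrt a - sqrt a + sqrt a * sqrt a by noncomm_ring,
      sqrt_mul_sqrt_self a]
    abel
  have hle : 0 ≤ sqrt a - a := sub_nonneg.mpr (le_sqrt_of_le_one ha₀ ha₁)
  exact sub_nonneg.mp (hsq ▸ add_nonneg hle hle)

end CFC

namespace Matrix

variable {n 𝕜 : Type*} [Fintype n] [RCLike 𝕜]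

lemma PosSemidef.sqrt_eq_cfcSqrt [DecidableEq n] {A : Matrix n n 𝕜} (hA : A.PosSemidef) :
    hA.sqrt = CFC.sqrt A := by
  rw [CFC.sqrt_eq_cfc, cfc_nnreal_eq_real _ A, hA.1.cfc_eq]
  simp only [IsHermitian.cfc, PosSemidef.sqrt, Unitary.conjStarAlgAut_apply]
  congr 3
  funext i
  simp [max_eq_left (hA.eigenvalues_nonneg i)]

lemma PosSemidef.trace_mul_nonneg [DecidableEq n] {A B : Matrix n n 𝕜} (hA : A.PosSemidef)
    (hB : B.PosSemidef) : 0 ≤ (A * B).trace := by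
  obtain ⟨C, rfl⟩ := CStarAlgebra.nonneg_iff_eq_star_mul_self.mp hB.nonneg
  rw [← mul_assoc, trace_mul_comm]
  simpa only [mul_assoc, star_eq_conjTranspose] using
    (hA.mul_mul_conjTranspose_same C).trace_nonneg

lemma re_trace_mul_le_re_trace_mul [DecidableEq n] {A B ρ : Matrix n n 𝕜} (hAB : A ≤ B)
    (hρ : ρ.PosSemidef) : RCLike.re (A * ρ).trace ≤ RCLike.re (B * ρ).trace := by
  have h := RCLike.nonneg_iff.mp ((le_iff.mp hAB).trace_mul_nonneg hρ)
  simp only [sub_mul, trace_sub, map_sub] at h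
  linarith [h.1]

lemma re_trace_one_sub_sqrt_conj_le [DecidableEq n] {Λ ρ : Matrix n n 𝕜} (hΛ₀ : 0 ≤ Λ)
    (hΛ₁ : Λ ≤ 1) (hρ : ρ.PosSemidef) :
    RCLike.re ((1 - CFC.sqrt Λ) * ρ * (1 - CFC.sqrt Λ)).trace ≤
      RCLike.re ρ.trace - RCLike.re (Λ * ρ).trace :=
  calc RCLike.re ((1 - CFC.sqrt Λ) * ρ * (1 - CFC.sqrt Λ)).trace
      = RCLike.re ((1 - CFC.sqrt Λ) * (1 - CFC.sqrt Λ) * ρ).trace := by rw [trace_mul_cycle]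
    _ ≤ RCLike.re ((1 - Λ) * ρ).trace :=
        re_trace_mul_le_re_trace_mul (CFC.one_sub_sqrt_mul_self_le hΛ₀ hΛ₁) hρ
    _ = RCLike.re ρ.trace - RCLike.re (Λ * ρ).trace := by
        rw [sub_mul, one_mul, trace_sub, map_sub]

/-- Cauchy–Schwarz for the semi-inner product `⟪X, Y⟫ = tr (Y M Xᴴ)` defined by `M ≥ 0`. -/
lemma PosSemidef.re_trace_mul_mul_conjTranspose_le {M : Matrix n n 𝕜} (hM : M.PosSemidef)
    (X Y : Matrix n n 𝕜) :
    RCLike.re (Y * M * Xᴴ).trace ≤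
      √(RCLike.re (X * M * Xᴴ).trace) * √(RCLike.re (Y * M * Yᴴ).trace) := by
  let := M.toMatrixSeminormedAddCommGroup hM
  let := M.toMatrixInnerProductSpace hM
  exact re_inner_le_norm X Y

/-- `K = sign A`; the sign function is continuous on the spectrum because the spectrum is finite. -/
lemma IsHermitian.exists_involution_mul_eq_abs [DecidableEq n] {A : Matrix n n 𝕜}
    (hA : A.IsHermitian) :
    ∃ K : Matrix n n 𝕜, K.IsHermitian ∧ K * K = 1 ∧ K * A = CFC.abs A := by
  have hsa : IsSelfAdjoint A := hA
  set sign : ℝ → ℝ := fun x => if 0 ≤ x then 1 else -1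
  have hcont : ContinuousOn sign (spectrum ℝ A) := A.finite_real_spectrum.continuousOn _
  refine ⟨cfc sign A, cfc_predicate sign A, ?_, ?_⟩
  · rw [← cfc_mul sign sign A, ← cfc_one ℝ A]
    refine cfc_congr fun x _ => ?_
    by_cases hx : 0 ≤ x <;> simp [sign, hx]
  · nth_rw 2 [← cfc_id' ℝ A]
    rw [← cfc_mul sign (fun x => x) A, CFC.abs_eq_cfc_norm A]
    refine cfc_congr fun x _ => ?_
    by_cases hx : 0 ≤ x
    · simp [sign, hx, abs_of_nonneg hx]
    · simp [sign, hx, abs_of_neg (not_le.mp hx)]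

lemma re_trace_mul_sub_conj_le [DecidableEq n] {ρ S K : Matrix n n 𝕜} (hρ : ρ.PosSemidef)
    (hS : S.IsHermitian) (hK : K.IsHermitian) (hKK : K * K = 1) :
    RCLike.re (K * (ρ - S * ρ * S)).trace ≤
      √(RCLike.re ((1 - S) * ρ * (1 - S)).trace) *
        (√(RCLike.re ρ.trace) + √(RCLike.re (S * ρ * S).trace)) := by
  have h1S : (1 - S)ᴴ = 1 - S := (isHermitian_one.sub hS).eq
  have hsplit : K * (ρ - S * ρ * S) = K * ((1 - S) * ρ) + K * (S * ρ * (1 - S)) := by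
    noncomm_ring
  have hfirst : (K * ((1 - S) * ρ)).trace = ((1 - S) * ρ * Kᴴ).trace := by
    rw [trace_mul_comm, hK.eq]
  have hsecond : (K * (S * ρ * (1 - S))).trace = (K * S * ρ * (1 - S)).trace := by
    simp only [mul_assoc]
  have hKρK : (K * ρ * Kᴴ).trace = ρ.trace := by
    rw [hK.eq, trace_mul_cycle, hKK, one_mul]
  have hKSρSK : (K * S * ρ * (K * S)ᴴ).trace = (S * ρ * S).trace := by
    rw [conjTranspose_mul, hK.eq, hS.eq, ← mul_assoc, trace_mul_comm, ← mul_assoc, ← mul_assoc,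
      ← mul_assoc, hKK, one_mul]
  rw [hsplit, trace_add, map_add, hfirst, hsecond, mul_add]
  have hρ₁ := hρ.re_trace_mul_mul_conjTranspose_le K (1 - S)
  have hρ₂ := hρ.re_trace_mul_mul_conjTranspose_le (1 - S) (K * S)
  rw [hKρK, h1S] at hρ₁
  rw [hKSρSK, h1S] at hρ₂
  linarith

end Matrix

lemma traceNorm_eq_re_trace_abs {n : Type*} [Fintype n] [DecidableEq n] (A : Matrix n n ℂ) :
    traceNorm A = (CFC.abs A).trace.re := by
  rw [traceNorm, PosSemidef.sqrt_eq_cfcSqrt]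
  rfl

theorem gentle_operator_lemma_general {n : Type*} [Fintype n] [DecidableEq n]
    (ε : ℝ)
    (ρ : Matrix n n ℂ) (hρ : ρ.PosSemidef) (hρtr : ρ.trace = 1)
    (Λ : Matrix n n ℂ) (hΛ : Λ.PosSemidef) (hΛle : (1 - Λ).PosSemidef)
    (h : 1 - ε ≤ ((Λ * ρ).trace).re) :
    traceNorm (ρ - hΛ.sqrt * ρ * hΛ.sqrt) ≤ 2 * Real.sqrt ε := by
  have hΛ₁ : Λ ≤ 1 := le_iff.mpr hΛle
  rw [hΛ.sqrt_eq_cfcSqrt]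
  set S := CFC.sqrt Λ
  have hS : S.IsHermitian := (CFC.sqrt_nonneg Λ).posSemidef.isHermitian
  have hSρS : (S * ρ * S).trace.re ≤ 1 :=
    calc (S * ρ * S).trace.re = (Λ * ρ).trace.re := by
          rw [trace_mul_cycle, CFC.sqrt_mul_sqrt_self Λ hΛ.nonneg]
      _ ≤ (1 * ρ).trace.re := re_trace_mul_le_re_trace_mul hΛ₁ hρ
      _ = 1 := by rw [one_mul, hρtr, Complex.one_re]
  have h1SρS : ((1 - S) * ρ * (1 - S)).trace.re ≤ ε := by
    have := re_trace_one_sub_sqrt_conj_le hΛ.nonneg hΛ₁ hρ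
    simp only [RCLike.re_to_complex, hρtr, Complex.one_re] at this
    linarith
  have hD : (ρ - S * ρ * S).IsHermitian :=
    hρ.isHermitian.sub (by simpa only [hS.eq] using (hρ.mul_mul_conjTranspose_same S).isHermitian)
  obtain ⟨K, hK, hKK, hKD⟩ := hD.exists_involution_mul_eq_abs
  calc traceNorm (ρ - S * ρ * S) = (K * (ρ - S * ρ * S)).trace.re := by
        rw [traceNorm_eq_re_trace_abs, hKD]
    _ ≤ √ε * (√1 + √1) := by
        refine (re_trace_mul_sub_conj_le hρ hS hK hKK).trans ?_
        simp only [RCLike.re_to_complex, hρtr, Complex.one_re]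
        gcongr
    _ = 2 * √ε := by rw [Real.sqrt_one]; ring

/-- Gentle Operator Lemma: if `0 ≤ Λ ≤ I` and `Tr[Λρ] ≥ 1 - ε`
then `‖ρ - √Λ ρ √Λ‖₁ ≤ 2√ε`. -/
theorem gentle_operator_lemma {n : Type*} [Fintype n] [DecidableEq n]
    (ε : ℝ) (hε : 0 < ε)
    (ρ : Matrix n n ℂ) (hρ : ρ.PosSemidef) (hρtr : ρ.trace = 1)
    (Λ : Matrix n n ℂ) (hΛ : Λ.PosSemidef) (hΛle : (1 - Λ).PosSemidef)
    (h : 1 - ε ≤ ((Λ * ρ).trace).re) :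
    traceNorm (ρ - hΛ.sqrt * ρ * hΛ.sqrt) ≤ 2 * Real.sqrt ε :=
  gentle_operator_lemma_general ε ρ hρ hρtr Λ hΛ hΛle h
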